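/- arXiv:math/0703216 — 4 statements merged into one kernel-verified Lean document; each statement's English description precedes it below -/
import Mathlib

section
/- Let B be a type with four binary operations a↗b, a↘b, a↖b, a↙b satisfying biquandle axioms (3) and (5), and let n ≥ 2. Then there exists a group homomorphism ρ : VB_n → Equiv.Perm (Fin n → B) such that for each i, ρ(σ_i) is the bijection of n-tuples replacing the pair of entries (a_i, a_{i+1}) by (a_{i+1}↗a_i, a_i↘a_{i+1}) and fixing all other coordinates, and ρ(ν_i) is the bijection transposing coordinates i and i+1. -/
/-!
Send `σ_i` to the switch `R (a, b) = (b ↗ a, a ↘ b)` applied to the entries `i, i + 1` and `ν_i`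
to the transposition of these entries. Axiom (3) makes `R` invertible. Generators acting on
disjoint pairs of coordinates commute, and the transposition is an involution. Each braid-type
relation involves only three consecutive coordinates and becomes an identity of maps on `B³`:
for the `σ_i` it is the set-theoretic Yang–Baxter equation for `R`, which is exactly axiom (5);
for the `ν_i` and for the mixed relation it holds for any `R`, since the swaps only relocate it.
-/

/-- Relators of the virtual braid group `VB_n`: generators `Sum.inl i = σ_i` and
`Sum.inr i = ν_i` for `i : Fin (n-1)`. -/
def virtualBraidRels (n : ℕ) : Set (FreeGroup (Fin (n - 1) ⊕ Fin (n - 1))) :=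
  let σ : Fin (n - 1) → FreeGroup (Fin (n - 1) ⊕ Fin (n - 1)) := fun i => FreeGroup.of (Sum.inl i)
  let ν : Fin (n - 1) → FreeGroup (Fin (n - 1) ⊕ Fin (n - 1)) := fun i => FreeGroup.of (Sum.inr i)
  { r | (∃ i k : Fin (n - 1), 1 < Nat.dist i.1 k.1 ∧
          r = σ i * σ k * (σ i)⁻¹ * (σ k)⁻¹) ∨
        (∃ i j : Fin (n - 1), (j : ℕ) = (i : ℕ) + 1 ∧
          r = σ i * σ j * σ i * (σ j * σ i * σ j)⁻¹) ∨
        (∃ i : Fin (n - 1), r = ν i * ν i) ∨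
        (∃ i k : Fin (n - 1), 1 < Nat.dist i.1 k.1 ∧
          r = ν i * ν k * (ν i)⁻¹ * (ν k)⁻¹) ∨
        (∃ i j : Fin (n - 1), (j : ℕ) = (i : ℕ) + 1 ∧
          r = ν i * ν j * ν i * (ν j * ν i * ν j)⁻¹) ∨
        (∃ i k : Fin (n - 1), 1 < Nat.dist i.1 k.1 ∧
          r = σ i * ν k * (σ i)⁻¹ * (ν k)⁻¹) ∨
        (∃ i j : Fin (n - 1), (j : ℕ) = (i : ℕ) + 1 ∧
          r = σ i * ν j * ν i * (ν j * ν i * σ j)⁻¹) }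

/-- The virtual braid group on `n` strands, presented by the generators
`σ_1,…,σ_{n-1}, ν_1,…,ν_{n-1}` and the virtual braid relations. -/
def VirtualBraidGroup (n : ℕ) : Type :=
  PresentedGroup (virtualBraidRels n)

noncomputable instance (n : ℕ) : Group (VirtualBraidGroup n) :=
  inferInstanceAs (Group (PresentedGroup (virtualBraidRels n)))

section PairAction

variable {ι B : Type*} [DecidableEq ι]

def pairAction (R : B × B → B × B) (p q : ι) (f : ι → B) : ι → B := fun j =>
  if j = p then (R (f p, f q)).1 else if j = q then (R (f p, f q)).2 else f j

def tripleAction (T : B × B × B → B × B × B) (p q r : ι) (f : ι → B) : ι → B := fun j =>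
  if j = p then (T (f p, f q, f r)).1
  else if j = q then (T (f p, f q, f r)).2.1
  else if j = r then (T (f p, f q, f r)).2.2
  else f j

def onFirstTwo (R : B × B → B × B) (x : B × B × B) : B × B × B :=
  ((R (x.1, x.2.1)).1, (R (x.1, x.2.1)).2, x.2.2)

def onLastTwo (R : B × B → B × B) : B × B × B → B × B × B :=
  Prod.map id R

def IsYangBaxter (R : B × B → B × B) : Prop :=
  onFirstTwo R ∘ onLastTwo R ∘ onFirstTwo R = onLastTwo R ∘ onFirstTwo R ∘ onLastTwo R

lemma isYangBaxter_prodComm : IsYangBaxter (Equiv.prodComm B B) := rfl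

lemma onFirstTwo_comp_prodComm (R : B × B → B × B) :
    onFirstTwo R ∘ onLastTwo (Equiv.prodComm B B) ∘ onFirstTwo (Equiv.prodComm B B) =
      onLastTwo (Equiv.prodComm B B) ∘ onFirstTwo (Equiv.prodComm B B) ∘ onLastTwo R :=
  rfl

lemma pairAction_id (p q : ι) (f : ι → B) : pairAction id p q f = f := by
  funext j
  unfold pairAction
  split_ifs <;> simp_all

lemma pairAction_pairAction {p q : ι} (hpq : p ≠ q) (R R' : B × B → B × B) (f : ι → B) :
    pairAction R p q (pairAction R' p q f) = pairAction (R ∘ R') p q f := by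
  funext j
  unfold pairAction
  split_ifs <;> simp_all

lemma pairAction_comm {p q p' q' : ι} (hpp' : p ≠ p') (hpq' : p ≠ q') (hqp' : q ≠ p')
    (hqq' : q ≠ q') (R R' : B × B → B × B) (f : ι → B) :
    pairAction R p q (pairAction R' p' q' f) = pairAction R' p' q' (pairAction R p q f) := by
  funext j
  unfold pairAction
  split_ifs <;> simp_all

lemma pairAction_prodComm (p q : ι) (f : ι → B) :
    pairAction (Equiv.prodComm B B) p q f = f ∘ Equiv.swap p q := by
  funext j
  unfold pairAction
  rw [Function.comp_apply, Equiv.swap_apply_def]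
  split_ifs <;> simp_all

lemma pairAction_eq_tripleAction_onFirstTwo (p q r : ι) (R : B × B → B × B) (f : ι → B) :
    pairAction R p q f = tripleAction (onFirstTwo R) p q r f := by
  funext j
  unfold pairAction tripleAction onFirstTwo
  split_ifs <;> simp_all

lemma pairAction_eq_tripleAction_onLastTwo {p q r : ι} (hpq : p ≠ q) (hpr : p ≠ r)
    (R : B × B → B × B) (f : ι → B) :
    pairAction R q r f = tripleAction (onLastTwo R) p q r f := by
  funext j
  unfold pairAction tripleAction onLastTwo
  split_ifs <;> simp_all

lemma tripleAction_tripleAction {p q r : ι} (hpq : p ≠ q) (hpr : p ≠ r) (hqr : q ≠ r)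
    (T T' : B × B × B → B × B × B) (f : ι → B) :
    tripleAction T p q r (tripleAction T' p q r f) = tripleAction (T ∘ T') p q r f := by
  funext j
  unfold tripleAction
  split_ifs <;> simp_all

lemma pairAction_braid {p q r : ι} (hpq : p ≠ q) (hpr : p ≠ r) (hqr : q ≠ r)
    {R₁ R₂ R₃ S₁ S₂ S₃ : B × B → B × B}
    (h : onFirstTwo R₁ ∘ onLastTwo R₂ ∘ onFirstTwo R₃ =
      onLastTwo S₁ ∘ onFirstTwo S₂ ∘ onLastTwo S₃) (f : ι → B) :
    pairAction R₁ p q (pairAction R₂ q r (pairAction R₃ p q f)) =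
      pairAction S₁ q r (pairAction S₂ p q (pairAction S₃ q r f)) := by
  simp only [pairAction_eq_tripleAction_onFirstTwo p q r,
    pairAction_eq_tripleAction_onLastTwo hpq hpr, tripleAction_tripleAction hpq hpr hqr, h]

def pairPerm (R : Equiv.Perm (B × B)) {p q : ι} (hpq : p ≠ q) : Equiv.Perm (ι → B) where
  toFun := pairAction R p q
  invFun := pairAction R.symm p q
  left_inv f := by rw [pairAction_pairAction hpq, R.symm_comp_self, pairAction_id]
  right_inv f := by rw [pairAction_pairAction hpq, R.self_comp_symm, pairAction_id]

lemma pairPerm_mul_comm (R R' : Equiv.Perm (B × B)) {p q p' q' : ι} (hpq : p ≠ q)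
    (hp'q' : p' ≠ q') (hpp' : p ≠ p') (hpq' : p ≠ q') (hqp' : q ≠ p') (hqq' : q ≠ q') :
    pairPerm R hpq * pairPerm R' hp'q' = pairPerm R' hp'q' * pairPerm R hpq :=
  Equiv.ext (pairAction_comm hpp' hpq' hqp' hqq' R R')

lemma pairPerm_mul (R R' : Equiv.Perm (B × B)) {p q : ι} (hpq : p ≠ q) :
    pairPerm R hpq * pairPerm R' hpq = pairPerm (R * R') hpq :=
  Equiv.ext (pairAction_pairAction hpq R R')

lemma pairPerm_one {p q : ι} (hpq : p ≠ q) : pairPerm (1 : Equiv.Perm (B × B)) hpq = 1 :=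
  Equiv.ext (pairAction_id p q)

lemma pairPerm_prodComm_mul_self {p q : ι} (hpq : p ≠ q) :
    pairPerm (Equiv.prodComm B B) hpq * pairPerm (Equiv.prodComm B B) hpq = 1 := by
  rw [pairPerm_mul, ← pairPerm_one hpq]
  rfl

lemma pairPerm_braid {p q r : ι} (hpq : p ≠ q) (hpr : p ≠ r) (hqr : q ≠ r)
    {R₁ R₂ R₃ S₁ S₂ S₃ : Equiv.Perm (B × B)}
    (h : onFirstTwo R₁ ∘ onLastTwo R₂ ∘ onFirstTwo R₃ =
      onLastTwo S₁ ∘ onFirstTwo S₂ ∘ onLastTwo S₃) :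
    pairPerm R₁ hpq * pairPerm R₂ hqr * pairPerm R₃ hpq =
      pairPerm S₁ hqr * pairPerm S₂ hpq * pairPerm S₃ hqr :=
  Equiv.ext (pairAction_braid hpq hpr hqr h)

end PairAction

namespace VirtualBraidGroup

variable {n : ℕ} {B : Type*}

def strand (i : Fin (n - 1)) : Fin n := ⟨i, by omega⟩

def nextStrand (i : Fin (n - 1)) : Fin n := ⟨i + 1, by omega⟩

lemma strand_ne_nextStrand (i : Fin (n - 1)) : strand i ≠ nextStrand i := by
  simp [strand, nextStrand, Fin.ext_iff]

def strandPerm (R : Equiv.Perm (B × B)) (i : Fin (n - 1)) : Equiv.Perm (Fin n → B) :=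
  pairPerm R (strand_ne_nextStrand i)

lemma strandPerm_mul_comm (R R' : Equiv.Perm (B × B)) {i k : Fin (n - 1)}
    (h : 1 < Nat.dist i k) :
    strandPerm R i * strandPerm R' k = strandPerm R' k * strandPerm R i := by
  unfold Nat.dist at h
  apply pairPerm_mul_comm
  all_goals simp only [strand, nextStrand, ne_eq, Fin.ext_iff]; omega

lemma strandPerm_braid {i k : Fin (n - 1)} (h : (k : ℕ) = i + 1)
    {R₁ R₂ R₃ S₁ S₂ S₃ : Equiv.Perm (B × B)}
    (hR : onFirstTwo R₁ ∘ onLastTwo R₂ ∘ onFirstTwo R₃ =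
      onLastTwo S₁ ∘ onFirstTwo S₂ ∘ onLastTwo S₃) :
    strandPerm R₁ i * strandPerm R₂ k * strandPerm R₃ i =
      strandPerm S₁ k * strandPerm S₂ i * strandPerm S₃ k := by
  obtain ⟨k, hk⟩ := k
  subst h
  refine pairPerm_braid (strand_ne_nextStrand i) ?_ ?_ hR
  all_goals simp only [strand, nextStrand, ne_eq, Fin.ext_iff]; omega

def generatorPerm (R : Equiv.Perm (B × B)) :
    Fin (n - 1) ⊕ Fin (n - 1) → Equiv.Perm (Fin n → B) :=
  Sum.elim (strandPerm R) (strandPerm (Equiv.prodComm B B))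

theorem lift_generatorPerm_eq_one {R : Equiv.Perm (B × B)} (hR : IsYangBaxter R) :
    ∀ r ∈ virtualBraidRels n, FreeGroup.lift (generatorPerm R) r = 1 := by
  intro r hr
  simp only [virtualBraidRels, Set.mem_ofPred_eq] at hr
  obtain ⟨i, k, hik, rfl⟩ | ⟨i, k, hik, rfl⟩ | ⟨i, rfl⟩ | ⟨i, k, hik, rfl⟩ |
      ⟨i, k, hik, rfl⟩ | ⟨i, k, hik, rfl⟩ | ⟨i, k, hik, rfl⟩ := hr <;>
    simp only [map_mul, map_inv, FreeGroup.lift_apply_of, generatorPerm, Sum.elim_inl,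
      Sum.elim_inr, mul_inv_eq_one]
  · rw [strandPerm_mul_comm R R hik]; group
  · exact strandPerm_braid hik hR
  · exact pairPerm_prodComm_mul_self _
  · rw [strandPerm_mul_comm _ _ hik]; group
  · exact strandPerm_braid hik isYangBaxter_prodComm
  · rw [strandPerm_mul_comm _ _ hik]; group
  · exact strandPerm_braid hik (onFirstTwo_comp_prodComm R)

def toPerm {R : Equiv.Perm (B × B)} (hR : IsYangBaxter R) :
    VirtualBraidGroup n →* Equiv.Perm (Fin n → B) :=
  PresentedGroup.toGroup (lift_generatorPerm_eq_one hR)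

lemma toPerm_of_inl {R : Equiv.Perm (B × B)} (hR : IsYangBaxter R) (i : Fin (n - 1)) :
    toPerm hR (PresentedGroup.of (Sum.inl i)) = strandPerm R i :=
  PresentedGroup.toGroup.of _

lemma toPerm_of_inr {R : Equiv.Perm (B × B)} (hR : IsYangBaxter R) (i : Fin (n - 1)) :
    toPerm hR (PresentedGroup.of (Sum.inr i)) = strandPerm (Equiv.prodComm B B) i :=
  PresentedGroup.toGroup.of _

end VirtualBraidGroup

section Biquandle

variable {B : Type*} {ur dr ul dl : B → B → B}

/-- With `ur, dr, ul, dl` standing for `↗, ↘, ↖, ↙`, this is `(a, b) ↦ (b ↗ a, a ↘ b)`. -/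
def biquandleSwitch (ax3a : ∀ a b : B, dl (dr a b) (ur b a) = a)
    (ax3b : ∀ a b : B, ul (ur a b) (dr b a) = a) (ax3c : ∀ a b : B, ur (ul a b) (dl b a) = a)
    (ax3d : ∀ a b : B, dr (dl a b) (ul b a) = a) : Equiv.Perm (B × B) where
  toFun x := (ur x.2 x.1, dr x.1 x.2)
  invFun x := (dl x.2 x.1, ul x.1 x.2)
  left_inv := fun (a, b) => Prod.ext (ax3a a b) (ax3b b a)
  right_inv := fun (a, b) => Prod.ext (ax3c a b) (ax3d b a)

lemma isYangBaxter_biquandleSwitch (ax3a : ∀ a b : B, dl (dr a b) (ur b a) = a)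
    (ax3b : ∀ a b : B, ul (ur a b) (dr b a) = a) (ax3c : ∀ a b : B, ur (ul a b) (dl b a) = a)
    (ax3d : ∀ a b : B, dr (dl a b) (ul b a) = a)
    (ax5a : ∀ a b c : B, ur (ur a b) c = ur (ur a (dr c b)) (ur b c))
    (ax5b : ∀ a b c : B, dr (dr a b) c = dr (dr a (ur c b)) (dr b c))
    (ax5c : ∀ a b c : B, ur (dr a b) (dr c (ur b a)) = dr (ur a c) (ur b (dr c a))) :
    IsYangBaxter (biquandleSwitch ax3a ax3b ax3c ax3d) := by
  funext ⟨a, b, c⟩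
  exact Prod.ext (ax5a c b a).symm (Prod.ext (ax5c b c a).symm (ax5b a b c))

end Biquandle

/-- A biquandle (axioms (3) and (5)) yields a permutation representation of the
virtual braid group `VB_n` on `n`-tuples: `σ_i` acts by replacing the entries
`(a_i, a_{i+1})` with `(a_{i+1}↗a_i, a_i↘a_{i+1})`, and `ν_i` acts by transposing
the coordinates `i` and `i+1`. -/
theorem virtual_braid_group_biquandle_representation
    (B : Type*) (ur dr ul dl : B → B → B)
    (ax3a : ∀ a b : B, dl (dr a b) (ur b a) = a)
    (ax3b : ∀ a b : B, ul (ur a b) (dr b a) = a)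
    (ax3c : ∀ a b : B, ur (ul a b) (dl b a) = a)
    (ax3d : ∀ a b : B, dr (dl a b) (ul b a) = a)
    (ax5a : ∀ a b c : B, ur (ur a b) c = ur (ur a (dr c b)) (ur b c))
    (ax5b : ∀ a b c : B, dr (dr a b) c = dr (dr a (ur c b)) (dr b c))
    (ax5c : ∀ a b c : B, ur (dr a b) (dr c (ur b a)) = dr (ur a c) (ur b (dr c a)))
    (n : ℕ) :
    ∃ ρ : VirtualBraidGroup n →* Equiv.Perm (Fin n → B),
      (∀ i : Fin (n - 1), ∀ f : Fin n → B,
        (ρ (PresentedGroup.of (Sum.inl i)) : Equiv.Perm (Fin n → B)) f = fun j : Fin n =>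
          if j = (⟨i.1, by have := i.isLt; omega⟩ : Fin n) then
            ur (f ⟨i.1 + 1, by have := i.isLt; omega⟩) (f ⟨i.1, by have := i.isLt; omega⟩)
          else if j = (⟨i.1 + 1, by have := i.isLt; omega⟩ : Fin n) then
            dr (f ⟨i.1, by have := i.isLt; omega⟩) (f ⟨i.1 + 1, by have := i.isLt; omega⟩)
          else f j) ∧
      (∀ i : Fin (n - 1), ∀ f : Fin n → B,
        (ρ (PresentedGroup.of (Sum.inr i)) : Equiv.Perm (Fin n → B)) f =
          f ∘ (Equiv.swap (⟨i.1, by have := i.isLt; omega⟩ : Fin n)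
                (⟨i.1 + 1, by have := i.isLt; omega⟩ : Fin n))) := by
  let R := biquandleSwitch ax3a ax3b ax3c ax3d
  have hR : IsYangBaxter R := isYangBaxter_biquandleSwitch ax3a ax3b ax3c ax3d ax5a ax5b ax5c
  refine ⟨VirtualBraidGroup.toPerm hR, fun i f => ?_, fun i f => ?_⟩
  · rw [VirtualBraidGroup.toPerm_of_inl]
    rfl
  · rw [VirtualBraidGroup.toPerm_of_inr]
    exact pairAction_prodComm _ _ f
end

section
/- Let R be a commutative ring and let s, t be elements of R. Then the determinant of the 4×4 matrix M₁ = !![−1, 0, −t*(s*t−1), s^2*t^2−s*t+1; 0, −1, s*t, −s*(s*t−1); −1, s*t−1, −s*t+2, 0; 0, s*t, −s*t+1, −1] equals (s−1)*(t−1)*(s*t−1). -/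
open Matrix

/-- The determinant of the relation matrix of the first virtual knot pair is the
generalized Alexander polynomial `(s-1)(t-1)(st-1)`. -/
theorem generalized_alexander_polynomial_first_pair
    (R : Type*) [CommRing R] (s t : R) :
    (!![-1, 0, -t * (s * t - 1), s ^ 2 * t ^ 2 - s * t + 1;
        0, -1, s * t, -s * (s * t - 1);
        -1, s * t - 1, -s * t + 2, 0;
        0, s * t, -s * t + 1, -1] : Matrix (Fin 4) (Fin 4) R).det =
      (s - 1) * (t - 1) * (s * t - 1) := by
  simp [Matrix.det_succ_row_zero, Fin.sum_univ_succ, Fin.succAbove, Fin.castSucc, Fin.castAdd, Fin.castLE]; ring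
end

section
/- Let R be a commutative ring and let s, t be elements of R. Then the determinant of the 4×4 matrix M₂ = !![−1, 0, −t*(s*t−1), s^2*t^2−s*t+1; 0, −1, s*t, −s*(s*t−1); −1, 2*s*t−2, −2*s*t+3, 0; 0, 2*s*t−1, −2*s*t+2, −1] equals (s−1)*(t−1)*(s*t−1). -/
open Matrix

/-- The determinant of the relation matrix of the second virtual knot pair is the
generalized Alexander polynomial `(s-1)(t-1)(st-1)`. -/
theorem generalized_alexander_polynomial_second_pair
    (R : Type*) [CommRing R] (s t : R) :
    (!![-1, 0, -t * (s * t - 1), s ^ 2 * t ^ 2 - s * t + 1;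
        0, -1, s * t, -s * (s * t - 1);
        -1, 2 * s * t - 2, -2 * s * t + 3, 0;
        0, 2 * s * t - 1, -2 * s * t + 2, -1] : Matrix (Fin 4) (Fin 4) R).det =
      (s - 1) * (t - 1) * (s * t - 1) := by
  simp [Matrix.det_succ_row_zero, Fin.sum_univ_succ, Fin.succAbove, Fin.castSucc, Fin.castAdd, Fin.castLE]; ring
end

section
/- Let H = Quaternion (ZMod 3) be the quaternion algebra over ℤ/3ℤ, and consider the free left H-module H³. Let r₁ = (−3, 1−2i−2k, 0), r₂ = (−1+i+k, 0, −1+i+k), r₃ = (−4i, 3, −3) be the Kishino relation vectors in H³. Then the left submodule Submodule.span H {r₁, r₂, r₃} is a proper submodule of H³ (it is not the whole module). Consequently the quaternionic representation of the biquandle of the Kishino knot, reduced mod 3, is a non-trivial module, so the Kishino knot is non-trivial. -/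
open scoped Quaternion

namespace KishinoMod3

/-- The quaternion unit `i` in `ℍ[ZMod 3]`. -/
def qI : ℍ[ZMod 3] := ⟨0, 1, 0, 0⟩

/-- The quaternion unit `j` in `ℍ[ZMod 3]`. -/
def qJ : ℍ[ZMod 3] := ⟨0, 0, 1, 0⟩

/-- The quaternion unit `k` in `ℍ[ZMod 3]`. -/
def qK : ℍ[ZMod 3] := ⟨0, 0, 0, 1⟩

/-- First Kishino relation vector `r₁ = (−3, 1−2i−2k, 0)`. -/
def r₁ : Fin 3 → ℍ[ZMod 3] := ![(-3 : ℍ[ZMod 3]), 1 - 2 * qI - 2 * qK, 0]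

/-- Second Kishino relation vector `r₂ = (−1+i+k, 0, −1+i+k)`. -/
def r₂ : Fin 3 → ℍ[ZMod 3] := ![-1 + qI + qK, 0, -1 + qI + qK]

/-- Third Kishino relation vector `r₃ = (−4i, 3, −3)`. -/
def r₃ : Fin 3 → ℍ[ZMod 3] := ![-4 * qI, (3 : ℍ[ZMod 3]), -3]

end KishinoMod3

/-!
Over `ℤ/3`, the middle entry of `r₁` is `u = 1 + i + k`, whose reduced norm `u * star u = 3`
vanishes, while the middle entries of `r₂` and `r₃` are `0`. Hence the left-linear functional
`x ↦ x₁ * star u` kills all three relations but not the basis vector `e₁`, so `e₁` is not in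
their span.
-/

theorem Submodule.span_ne_top_of_forall_apply_mul_eq_zero {R ι : Type*} [Ring R]
    [DecidableEq ι] {s : Set (ι → R)} (i : ι) {c : R} (hc : c ≠ 0)
    (hs : ∀ x ∈ s, x i * c = 0) : Submodule.span R s ≠ ⊤ := by
  let φ : (ι → R) →ₗ[R] R := LinearMap.toSpanSingleton R R c ∘ₗ LinearMap.proj i
  have hφ : ∀ x, φ x = x i * c := fun _ => rfl
  have hle : Submodule.span R s ≤ LinearMap.ker φ :=
    Submodule.span_le.mpr fun x hx => by simpa [hφ] using hs x hx
  intro htop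
  rw [htop, top_le_iff, LinearMap.ker_eq_top] at hle
  have hφe := LinearMap.congr_fun hle (Pi.single i 1)
  simp only [hφ, Pi.single_eq_same, one_mul, LinearMap.zero_apply] at hφe
  exact hc hφe

namespace KishinoMod3

def oneAddIAddK : ℍ[ZMod 3] := 1 + qI + qK

theorem normSq_oneAddIAddK : Quaternion.normSq oneAddIAddK = 0 := by decide

theorem re_oneAddIAddK : oneAddIAddK.re = 1 := rfl

theorem star_oneAddIAddK_ne_zero : star oneAddIAddK ≠ 0 :=
  star_ne_zero.mpr fun h => by simpa [h] using re_oneAddIAddK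

theorem r₁_one : r₁ 1 = oneAddIAddK := by ext <;> rfl

theorem r₂_one : r₂ 1 = 0 := rfl

theorem r₃_one : r₃ 1 = 0 := by ext <;> rfl

/-- The mod-3 quaternionic representation of the biquandle of the Kishino knot is a
non-trivial module: the span of the Kishino relation vectors is a proper submodule
of `ℍ[ZMod 3]³`. Hence the Kishino knot is non-trivial. -/
theorem kishino_quaternionic_module_mod3_nontrivial :
    Submodule.span ℍ[ZMod 3] ({r₁, r₂, r₃} : Set (Fin 3 → ℍ[ZMod 3])) ≠ ⊤ := by
  refine Submodule.span_ne_top_of_forall_apply_mul_eq_zero 1 star_oneAddIAddK_ne_zero ?_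
  rintro x (rfl | rfl | rfl)
  · rw [r₁_one, Quaternion.self_mul_star, normSq_oneAddIAddK, Quaternion.coe_zero]
  · rw [r₂_one, zero_mul]
  · rw [r₃_one, zero_mul]

end KishinoMod3
end
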